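/- arXiv:2210.09295 — 2 statements merged into one kernel-verified Lean document; each statement's English description precedes it below -/
import Mathlib

section
/- Perceptron convergence theorem: if a sequence of training examples (xᵢ, yᵢ) with yᵢ ∈ {−1, 1}, ‖xᵢ‖ ≤ R, is linearly separable with margin γ > 0 by a unit vector w* (i.e., yᵢ⟨w*, xᵢ⟩ ≥ γ for all i), then the perceptron algorithm starting from w = 0 makes at most R²/γ² mistakes. -/
/-!
Each mistake moves `w` by a step `u = y • x` with `⟪w*, u⟫ ≥ γ`, `⟪w, u⟫ ≤ 0` and `‖u‖ ≤ R`.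
After `M` mistakes the first property makes `⟪w*, w⟫ ≥ Mγ` grow linearly, while the
other two keep `‖w‖² ≤ MR²`, so `‖w‖` grows at most like `√M`. Cauchy–Schwarz with
`‖w*‖ = 1` gives `Mγ ≤ ‖w‖ ≤ R√M`, i.e. `M ≤ R²/γ²`.
-/

open RealInnerProductSpace

section StepRun

variable {E : Type*} [NormedAddCommGroup E] [InnerProductSpace ℝ E]
  {M : ℕ} {w u : ℕ → E}

theorem le_inner_of_steps (hw0 : w 0 = 0) (hstep : ∀ t < M, w (t + 1) = w t + u t)
    {v : E} {γ : ℝ} (hγ : ∀ t < M, γ ≤ ⟪v, u t⟫) :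
    ∀ t ≤ M, t * γ ≤ ⟪v, w t⟫ := by
  intro t ht
  induction t with
  | zero => simp [hw0]
  | succ t ih =>
    rw [hstep t ht, inner_add_right]
    push_cast
    linarith [ih (by omega), hγ t ht]

theorem norm_sq_le_of_steps (hw0 : w 0 = 0) (hstep : ∀ t < M, w (t + 1) = w t + u t)
    (hobtuse : ∀ t < M, ⟪w t, u t⟫ ≤ 0) {R : ℝ} (hR : ∀ t < M, ‖u t‖ ≤ R) :
    ∀ t ≤ M, ‖w t‖ ^ 2 ≤ t * R ^ 2 := by
  intro t ht
  induction t with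
  | zero => simp [hw0]
  | succ t ih =>
    have hu : ‖u t‖ ^ 2 ≤ R ^ 2 := pow_le_pow_left₀ (norm_nonneg _) (hR t ht) 2
    rw [hstep t ht, norm_add_sq_real]
    push_cast
    linarith [ih (by omega), hobtuse t ht]

end StepRun

theorem le_div_sq_of_mul_le_of_sq_le {n a γ R : ℝ} (hn : 0 ≤ n) (hγ : 0 < γ)
    (hlower : n * γ ≤ a) (hupper : a ^ 2 ≤ n * R ^ 2) : n ≤ R ^ 2 / γ ^ 2 := by
  rw [le_div_iff₀ (by positivity)]
  have hsq : (n * γ) ^ 2 ≤ n * R ^ 2 :=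
    (pow_le_pow_left₀ (by positivity) hlower 2).trans hupper
  nlinarith

theorem norm_smul_of_eq_one_or_eq_neg_one {E : Type*} [SeminormedAddCommGroup E]
    [NormedSpace ℝ E] {c : ℝ} (hc : c = 1 ∨ c = -1) (x : E) : ‖c • x‖ = ‖x‖ := by
  rcases hc with rfl | rfl <;> simp

/-- Perceptron convergence theorem: if the examples `(xᵢ, yᵢ)`, `yᵢ ∈ {-1,1}`,
`‖xᵢ‖ ≤ R`, are separated with margin `γ > 0` by a unit vector `w*`, then a run of
the perceptron starting from `w 0 = 0` makes at most `R²/γ²` mistakes. -/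
theorem perceptron_convergence {d : ℕ} {ι : Type*}
    (x : ι → EuclideanSpace ℝ (Fin d)) (y : ι → ℝ)
    (hy : ∀ i, y i = 1 ∨ y i = -1)
    (R γ : ℝ) (hR : ∀ i, ‖x i‖ ≤ R) (hγ : 0 < γ)
    (wstar : EuclideanSpace ℝ (Fin d)) (hws : ‖wstar‖ = 1)
    (hmargin : ∀ i, γ ≤ y i * (inner ℝ wstar (x i) : ℝ))
    (M : ℕ) (w : ℕ → EuclideanSpace ℝ (Fin d)) (idx : ℕ → ι)
    (hw0 : w 0 = 0)
    (hmistake : ∀ t < M, y (idx t) * (inner ℝ (w t) (x (idx t)) : ℝ) ≤ 0)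
    (hupdate : ∀ t < M, w (t + 1) = w t + y (idx t) • x (idx t)) :
    (M : ℝ) ≤ R ^ 2 / γ ^ 2 := by
  have hlower : (M : ℝ) * γ ≤ ⟪wstar, w M⟫ :=
    le_inner_of_steps hw0 hupdate (fun t _ => by
      simpa only [real_inner_smul_right] using hmargin (idx t)) M le_rfl
  have hupper : ‖w M‖ ^ 2 ≤ M * R ^ 2 :=
    norm_sq_le_of_steps hw0 hupdate
      (fun t ht => by simpa only [real_inner_smul_right] using hmistake t ht)
      (fun t _ => (norm_smul_of_eq_one_or_eq_neg_one (hy _) _).trans_le (hR _)) M le_rfl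
  have hcs : ⟪wstar, w M⟫ ≤ ‖w M‖ := by
    simpa only [hws, one_mul] using real_inner_le_norm wstar (w M)
  exact le_div_sq_of_mul_le_of_sq_le M.cast_nonneg hγ (hlower.trans hcs) hupper
end

section
/- In the perceptron convergence setting, after M mistakes the weight vector w satisfies ⟨w, w*⟩ ≥ Mγ and ‖w‖² ≤ MR², and combining these via Cauchy–Schwarz yields M ≤ R²/γ². -/
/-!
Each mistake adds `y • x` to `w`. The margin makes `⟪w, w*⟫` grow by at least `γ` per update,
while the mistake condition `y ⟪w, x⟫ ≤ 0` kills the cross term in `‖w + y • x‖²`, so `‖w‖²`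
grows by at most `‖x‖² ≤ R²`. Cauchy–Schwarz with `‖w*‖ = 1` gives `Mγ ≤ ‖w‖`, hence
`M²γ² ≤ MR²`.
-/

open RealInnerProductSpace

lemma add_nat_mul_le_of_forall_add_le {a : ℕ → ℝ} {c : ℝ} {M : ℕ}
    (h : ∀ t < M, a t + c ≤ a (t + 1)) : a 0 + M * c ≤ a M := by
  induction M with
  | zero => simp
  | succ M ih =>
    push_cast
    linarith [ih fun t ht => h t (by omega), h M (by omega)]

lemma le_add_nat_mul_of_forall_le_add {a : ℕ → ℝ} {c : ℝ} {M : ℕ}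
    (h : ∀ t < M, a (t + 1) ≤ a t + c) : a M ≤ a 0 + M * c := by
  have := add_nat_mul_le_of_forall_add_le (a := fun t => -a t) (c := -c)
    fun t ht => by linarith [h t ht]
  linarith

lemma norm_add_sq_le_of_inner_nonpos {E : Type*} [NormedAddCommGroup E] [InnerProductSpace ℝ E]
    {w v : E} (h : ⟪w, v⟫ ≤ 0) : ‖w + v‖ ^ 2 ≤ ‖w‖ ^ 2 + ‖v‖ ^ 2 := by
  rw [norm_add_sq_real]
  linarith

lemma le_div_sq_of_mul_sq_le_mul {m a b : ℝ} (hm : 0 ≤ m) (ha : 0 < a)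
    (h : (m * a) ^ 2 ≤ m * b ^ 2) : m ≤ b ^ 2 / a ^ 2 := by
  rw [le_div_iff₀ (by positivity)]
  rcases hm.eq_or_lt with rfl | hm
  · simpa using sq_nonneg b
  · nlinarith

/-- In the perceptron convergence setting, after `M` mistakes the weight vector
satisfies `⟨w, w*⟩ ≥ Mγ` and `‖w‖² ≤ MR²`, which via Cauchy–Schwarz give `M ≤ R²/γ²`. -/
theorem perceptron_invariants {d : ℕ} {ι : Type*}
    (x : ι → EuclideanSpace ℝ (Fin d)) (y : ι → ℝ)
    (hy : ∀ i, y i = 1 ∨ y i = -1)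
    (R γ : ℝ) (hR : ∀ i, ‖x i‖ ≤ R) (hγ : 0 < γ)
    (wstar : EuclideanSpace ℝ (Fin d)) (hws : ‖wstar‖ = 1)
    (hmargin : ∀ i, γ ≤ y i * (inner ℝ wstar (x i) : ℝ))
    (M : ℕ) (w : ℕ → EuclideanSpace ℝ (Fin d)) (idx : ℕ → ι)
    (hw0 : w 0 = 0)
    (hmistake : ∀ t < M, y (idx t) * (inner ℝ (w t) (x (idx t)) : ℝ) ≤ 0)
    (hupdate : ∀ t < M, w (t + 1) = w t + y (idx t) • x (idx t)) :
    (M : ℝ) * γ ≤ (inner ℝ (w M) wstar : ℝ) ∧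
    ‖w M‖ ^ 2 ≤ (M : ℝ) * R ^ 2 ∧
    (M : ℝ) ≤ R ^ 2 / γ ^ 2 := by
  have hinner : (M : ℝ) * γ ≤ ⟪w M, wstar⟫ := by
    have := add_nat_mul_le_of_forall_add_le (a := fun t => ⟪w t, wstar⟫) (c := γ) fun t ht => by
      rw [hupdate t ht, inner_add_left, real_inner_smul_left, real_inner_comm wstar (x (idx t))]
      linarith [hmargin (idx t)]
    simpa [hw0] using this
  have hnorm : ‖w M‖ ^ 2 ≤ M * R ^ 2 := by
    have := le_add_nat_mul_of_forall_le_add (a := fun t => ‖w t‖ ^ 2) (c := R ^ 2) fun t ht => by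
      have hyx : ‖y (idx t) • x (idx t)‖ ≤ R := by
        rcases hy (idx t) with h | h <;> simpa [h] using hR (idx t)
      rw [hupdate t ht]
      refine (norm_add_sq_le_of_inner_nonpos ?_).trans ?_
      · simpa [real_inner_smul_right] using hmistake t ht
      · gcongr
    simpa [hw0] using this
  have hcs : ⟪w M, wstar⟫ ≤ ‖w M‖ := by
    simpa [hws] using real_inner_le_norm (w M) wstar
  refine ⟨hinner, hnorm, le_div_sq_of_mul_sq_le_mul M.cast_nonneg hγ ?_⟩
  calc ((M : ℝ) * γ) ^ 2 ≤ ‖w M‖ ^ 2 := by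
        gcongr
        exact hinner.trans hcs
    _ ≤ M * R ^ 2 := hnorm
end
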